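/- Let A ⊆ ℝ² be a measurable set with Lebesgue measure 0 < |A| < ∞, let x : ℝ² → ℝ^k be a bounded measurable covariate map, fix β ∈ ℝ^{k+1} and set λ_β(y) = exp(β_0 + Σ_{j=1}^k x_j(y) β_j). Fix presence points y_1, …, y_n ∈ A and let Y_{n+1}, Y_{n+2}, … be i.i.d. random points uniformly distributed on A. For j, j' ∈ {0, 1, …, k} (with x_0 ≡ 1) define the discretized information entry I_{jj'}^{(m)} = (|A|/m)·( Σ_{i=1}^n x_j(y_i) x_{j'}(y_i) λ_β(y_i) + Σ_{i=n+1}^m x_j(Y_i) x_{j'}(Y_i) λ_β(Y_i) ). Then as m → ∞, I_{jj'}^{(m)} converges in probability to ∫_A x_j(y) x_{j'}(y) λ_β(y) dy, the (j,j') Fisher information entry of the continuous Poisson point-process log-likelihood l(β) = Σ_{i=1}^n log λ_β(y_i) − ∫_A λ_β(y) dy. -/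

import Mathlib

open Real Finset Filter MeasureTheory ProbabilityTheory

noncomputable section

/-- Extended covariate maps: `x_0 ≡ 1` together with `x_1, …, x_k`. -/
def xec {k : ℕ} (x : ℝ × ℝ → Fin k → ℝ) (j : Fin (k + 1)) (y : ℝ × ℝ) : ℝ :=
  (Fin.cons (1 : ℝ) (x y) : Fin (k + 1) → ℝ) j

/-- The intensity `λ_β(y) = exp(β_0 + Σ_{j=1}^k x_j(y) β_j)`. -/
def lamc {k : ℕ} (x : ℝ × ℝ → Fin k → ℝ) (β : Fin (k + 1) → ℝ) (y : ℝ × ℝ) : ℝ :=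
  Real.exp (β 0 + ∑ j : Fin k, x y j * β j.succ)

/-- The uniform distribution on a set `A ⊆ ℝ²`: the probability measure
proportional to Lebesgue measure restricted to `A`. -/
def unifOn (A : Set (ℝ × ℝ)) : Measure (ℝ × ℝ) :=
  (volume A)⁻¹ • volume.restrict A

/-!
The sampled terms `f(Y_i)`, with `f = x_j x_{j'} λ_β` bounded and measurable, are i.i.d. and
integrable, so by the strong law of large numbers their averages converge almost surely to
`E f(Y_1) = |A|⁻¹ ∫_A f`. The `n` presence terms change the partial sums by a fixed amount,
which is negligible after division by `m`. Almost sure convergence implies convergence in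
probability.
-/

open Topology Function

theorem tendsto_add_sum_Ico_div {u : ℕ → ℝ} {L : ℝ}
    (h : Tendsto (fun m : ℕ => (∑ i ∈ range m, u i) / m) atTop (𝓝 L)) (a : ℝ) (n : ℕ) :
    Tendsto (fun m : ℕ => (a + ∑ i ∈ Ico n m, u i) / m) atTop (𝓝 L) := by
  have hshift : Tendsto (fun m : ℕ => (a - ∑ i ∈ range n, u i) / m) atTop (𝓝 0) :=
    tendsto_const_nhds.div_atTop tendsto_natCast_atTop_atTop
  refine (by simpa using hshift.add h : Tendsto _ atTop (𝓝 L)).congr' ?_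
  filter_upwards [eventually_ge_atTop n] with m hm
  rw [sum_Ico_eq_sub _ hm]
  ring

theorem ae_tendsto_add_sum_Ico_comp_div {Ω E : Type*} [MeasurableSpace Ω] [MeasurableSpace E]
    {μ : Measure Ω} {ν : Measure E} {Y : ℕ → Ω → E} (hY : ∀ i, Measurable (Y i))
    (hindep : iIndepFun Y μ) (hlaw : ∀ i, μ.map (Y i) = ν) {f : E → ℝ} (hf : Measurable f)
    (hfi : Integrable f ν) (a : ℝ) (n : ℕ) :
    ∀ᵐ ω ∂μ, Tendsto (fun m : ℕ => (a + ∑ i ∈ Ico n m, f (Y i ω)) / m) atTop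
      (𝓝 (∫ z, f z ∂ν)) := by
  have hint : Integrable (fun ω => f (Y 0 ω)) μ :=
    (hlaw 0 ▸ hfi).comp_measurable (hY 0)
  have hpair : Pairwise ((· ⟂ᵢ[μ] ·) on fun i ω => f (Y i ω)) :=
    fun i i' hii' => (hindep.indepFun hii').comp hf hf
  have hident (i : ℕ) : IdentDistrib (fun ω => f (Y i ω)) (fun ω => f (Y 0 ω)) μ μ :=
    IdentDistrib.comp ⟨(hY i).aemeasurable, (hY 0).aemeasurable, by rw [hlaw, hlaw]⟩ hf
  have hmean : μ[fun ω => f (Y 0 ω)] = ∫ z, f z ∂ν := by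
    rw [← hlaw 0, integral_map (hY 0).aemeasurable hf.aestronglyMeasurable]
  filter_upwards [strong_law_ae_real _ hint hpair hident] with ω hω
  exact hmean ▸ tendsto_add_sum_Ico_div hω a n

theorem isProbabilityMeasure_unifOn {A : Set (ℝ × ℝ)} (h0 : volume A ≠ 0)
    (hfin : volume A ≠ ⊤) : IsProbabilityMeasure (unifOn A) :=
  cond_isProbabilityMeasure_of_finite h0 hfin

theorem integral_unifOn (A : Set (ℝ × ℝ)) (f : ℝ × ℝ → ℝ) :
    ∫ z, f z ∂unifOn A = (volume A).toReal⁻¹ * ∫ z in A, f z := by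
  rw [unifOn, integral_smul_measure, ENNReal.toReal_inv, smul_eq_mul]

section Covariates

variable {k : ℕ} {x : ℝ × ℝ → Fin k → ℝ}

theorem measurable_xec (hx : Measurable x) (j : Fin (k + 1)) : Measurable (xec x j) := by
  show Measurable fun z => xec x j z
  induction j using Fin.cases with
  | zero => simpa only [xec, Fin.cons_zero] using measurable_const
  | succ i => simp only [xec, Fin.cons_succ]; exact (measurable_pi_apply i).comp hx

theorem measurable_lamc (hx : Measurable x) (β : Fin (k + 1) → ℝ) : Measurable (lamc x β) :=
  measurable_exp.comp <| measurable_const.add <|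
    Finset.measurable_sum _ fun i _ => ((measurable_pi_apply i).comp hx).mul measurable_const

theorem measurable_xec_mul_xec_mul_lamc (hx : Measurable x) (j j' : Fin (k + 1))
    (β : Fin (k + 1) → ℝ) : Measurable fun z => xec x j z * xec x j' z * lamc x β z :=
  ((measurable_xec hx j).mul (measurable_xec hx j')).mul (measurable_lamc hx β)

variable {M : ℝ} (hbd : ∀ y, ‖x y‖ ≤ M)
include hbd

theorem abs_xec_le (j : Fin (k + 1)) (z : ℝ × ℝ) : |xec x j z| ≤ max 1 M := by
  induction j using Fin.cases with
  | zero => simp [xec]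
  | succ i =>
    simp only [xec, Fin.cons_succ, ← Real.norm_eq_abs]
    exact ((norm_le_pi_norm (x z) i).trans (hbd z)).trans (le_max_right _ _)

theorem lamc_le (β : Fin (k + 1) → ℝ) (z : ℝ × ℝ) :
    lamc x β z ≤ exp (|β 0| + ∑ i : Fin k, M * |β i.succ|) := by
  refine exp_le_exp.2 (add_le_add (le_abs_self _) (sum_le_sum fun i _ => ?_))
  calc x z i * β i.succ ≤ |x z i| * |β i.succ| := (le_abs_self _).trans (abs_mul _ _).le
    _ ≤ M * |β i.succ| := by
      gcongr
      exact (norm_le_pi_norm (x z) i).trans (hbd z)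

theorem integrable_xec_mul_xec_mul_lamc (hx : Measurable x) {ν : Measure (ℝ × ℝ)}
    [IsFiniteMeasure ν] (j j' : Fin (k + 1)) (β : Fin (k + 1) → ℝ) :
    Integrable (fun z => xec x j z * xec x j' z * lamc x β z) ν := by
  refine Integrable.of_bound (measurable_xec_mul_xec_mul_lamc hx j j' β).aestronglyMeasurable
    (max 1 M * max 1 M * exp (|β 0| + ∑ i : Fin k, M * |β i.succ|)) (ae_of_all _ fun z => ?_)
  have hlamc : ‖lamc x β z‖ = lamc x β z := Real.norm_of_nonneg (exp_pos _).le
  rw [norm_mul, norm_mul, hlamc]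
  gcongr
  exacts [(exp_pos _).le, abs_xec_le hbd j z, abs_xec_le hbd j' z, lamc_le hbd β z]

end Covariates

theorem stmt_10_general {k : ℕ} (A : Set (ℝ × ℝ))
    (h0 : volume A ≠ 0) (hfin : volume A ≠ ⊤)
    (x : ℝ × ℝ → Fin k → ℝ) (hxm : Measurable x) (M : ℝ) (hbd : ∀ y, ‖x y‖ ≤ M)
    (β : Fin (k + 1) → ℝ) (n : ℕ) (y : ℕ → ℝ × ℝ)
    {Ω : Type*} [MeasurableSpace Ω] (μ : Measure Ω) [IsProbabilityMeasure μ]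
    (Y : ℕ → Ω → ℝ × ℝ) (hYmeas : ∀ i, Measurable (Y i))
    (hindep : iIndepFun Y μ)
    (hunif : ∀ i, Measure.map (Y i) μ = unifOn A)
    (j j' : Fin (k + 1)) :
    TendstoInMeasure μ
      (fun m ω =>
        ((volume A).toReal / m) *
          ((∑ i ∈ Finset.range n, xec x j (y i) * xec x j' (y i) * lamc x β (y i)) +
            ∑ i ∈ Finset.Ico n m, xec x j (Y i ω) * xec x j' (Y i ω) * lamc x β (Y i ω)))
      Filter.atTop
      (fun _ => ∫ z in A, xec x j z * xec x j' z * lamc x β z) := by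
  set f : ℝ × ℝ → ℝ := fun z => xec x j z * xec x j' z * lamc x β z
  have hf : Measurable f := measurable_xec_mul_xec_mul_lamc hxm j j' β
  have := isProbabilityMeasure_unifOn h0 hfin
  have hslln := ae_tendsto_add_sum_Ico_comp_div hYmeas hindep hunif hf
    (integrable_xec_mul_xec_mul_lamc hbd hxm j j' β) (∑ i ∈ range n, f (y i)) n
  refine tendstoInMeasure_of_tendsto_ae (fun m => (measurable_const.mul (measurable_const.add
    (Finset.measurable_sum _ fun i _ => hf.comp (hYmeas i)))).aestronglyMeasurable) ?_
  have hA : (volume A).toReal ≠ 0 := ENNReal.toReal_ne_zero.2 ⟨h0, hfin⟩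
  filter_upwards [hslln] with ω hω
  convert hω.const_mul (volume A).toReal using 1
  · ext m
    ring
  · rw [integral_unifOn, ← mul_assoc, mul_inv_cancel₀ hA, one_mul]

/-- With presence points `y_1, …, y_n ∈ A` fixed and `Y_{n+1}, Y_{n+2}, …` i.i.d.
uniform on `A`, the discretized information entry
`I_{jj'}^{(m)} = (|A|/m)(Σ_{i=1}^n x_j(y_i) x_{j'}(y_i) λ_β(y_i) + Σ_{i=n+1}^m x_j(Y_i) x_{j'}(Y_i) λ_β(Y_i))`
converges in probability, as `m → ∞`, to `∫_A x_j(y) x_{j'}(y) λ_β(y) dy`, the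
`(j,j')` Fisher information entry of the continuous Poisson point-process
log-likelihood. -/
theorem stmt_10 {k : ℕ} (A : Set (ℝ × ℝ)) (hA : MeasurableSet A)
    (h0 : volume A ≠ 0) (hfin : volume A ≠ ⊤)
    (x : ℝ × ℝ → Fin k → ℝ) (hxm : Measurable x) (M : ℝ) (hbd : ∀ y, ‖x y‖ ≤ M)
    (β : Fin (k + 1) → ℝ) (n : ℕ) (y : ℕ → ℝ × ℝ) (hy : ∀ i < n, y i ∈ A)
    {Ω : Type*} [MeasurableSpace Ω] (μ : Measure Ω) [IsProbabilityMeasure μ]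
    (Y : ℕ → Ω → ℝ × ℝ) (hYmeas : ∀ i, Measurable (Y i))
    (hindep : iIndepFun Y μ)
    (hunif : ∀ i, Measure.map (Y i) μ = unifOn A)
    (j j' : Fin (k + 1)) :
    TendstoInMeasure μ
      (fun m ω =>
        ((volume A).toReal / m) *
          ((∑ i ∈ Finset.range n, xec x j (y i) * xec x j' (y i) * lamc x β (y i)) +
            ∑ i ∈ Finset.Ico n m, xec x j (Y i ω) * xec x j' (Y i ω) * lamc x β (Y i ω)))
      Filter.atTop
      (fun _ => ∫ z in A, xec x j z * xec x j' z * lamc x β z) :=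
  stmt_10_general A h0 hfin x hxm M hbd β n y μ Y hYmeas hindep hunif j j'
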